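/- For every integer m ≥ 0, the multiple zeta value ζ(2,{1}_m) = ∑_{n₁ > n₂ > ⋯ > n_{m+1} ≥ 1} 1/(n₁² n₂ ⋯ n_{m+1}) equals ζ(m+2). -/

import Mathlib

/-- Multiple harmonic number (strictly decreasing indices). -/
noncomputable def mh : List ℝ → ℕ → ℝ
  | [], _ => 1
  | s :: t, n => ∑ k ∈ Finset.Icc 1 n, (1 / (k : ℝ) ^ s) * mh t (k - 1)

/-- Multiple zeta value. -/
noncomputable def mzv : List ℝ → ℝ
  | [] => 1
  | s :: t => ∑' k : ℕ, (1 / ((k : ℝ) + 1) ^ s) * mh t k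

/-- Riemann zeta value (real series). -/
noncomputable def rz (s : ℝ) : ℝ := ∑' n : ℕ, 1 / ((n : ℝ) + 1) ^ s

/-!
Write `e m n = e_m(1, 1/2, …, 1/n)` (`esymmRecip`), so that `ζ(2, {1}_m) = ∑ₙ e m n / (n + 1)²`.
The generating function `F m x = ∑ₙ e m n / (n + 1) · x^(n + 1)` (`esymmGF`) satisfies
`F 0 x = -log (1 - x)` and, by a Cauchy product with the geometric series,
`(F (m + 1))' = F m / (1 - x)`; hence `F m x = (-log (1 - x))^(m + 1) / (m + 1)!`.
Writing `1 / (n + 1) = ∫₀¹ xⁿ dx` gives `ζ(2, {1}_m) = ∫₀¹ F m x / x dx`, and the substitution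
`x = 1 - e^(-t)` followed by expanding `e^(-t) / (1 - e^(-t))` into a geometric series turns this
into `∑ⱼ ∫₀^∞ t^(m + 1) e^(-(j + 1) t) / (m + 1)! dt = ∑ⱼ 1 / (j + 1)^(m + 2)`.
-/

open Real Set MeasureTheory
open scoped Nat

namespace ZetaTwoOnes

lemma summable_add_one_pow_mul_geometric (m : ℕ) {r : ℝ} (hr₀ : 0 ≤ r) (hr₁ : r < 1) :
    Summable fun n : ℕ => ((n : ℝ) + 1) ^ m * r ^ n := by
  refine (summable_descFactorial_mul_geometric_of_norm_lt_one m
    (by rwa [norm_of_nonneg hr₀])).of_nonneg_of_le (fun n => by positivity) fun n => ?_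
  gcongr
  have := Nat.pow_sub_le_descFactorial (n + m) m
  rw [show n + m + 1 - m = n + 1 by omega] at this
  exact_mod_cast this

lemma hasDerivAt_neg_log_one_sub_pow_div_factorial (p : ℕ) {x : ℝ} (hx : x < 1) :
    HasDerivAt (fun y => (-log (1 - y)) ^ (p + 1) / (p + 1)!)
      ((-log (1 - x)) ^ p / p ! / (1 - x)) x := by
  have hx' : 1 - x ≠ 0 := by linarith
  have hlog : HasDerivAt (fun y => -log (1 - y)) (1 / (1 - x)) x := by
    refine (((hasDerivAt_id x).const_sub 1).log hx').neg.congr_deriv ?_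
    simp [neg_div]
  refine ((hlog.pow (p + 1)).div_const ((p + 1)! : ℝ)).congr_deriv ?_
  rw [Nat.factorial_succ]
  push_cast
  field_simp

lemma lintegral_Ioo_const_mul_pow {c : ℝ} (hc : 0 ≤ c) (k : ℕ) :
    ∫⁻ x in Ioo (0 : ℝ) 1, ENNReal.ofReal (c * x ^ k) = ENNReal.ofReal (c / (k + 1)) := by
  have hint : IntegrableOn (fun x : ℝ => c * x ^ k) (Ioo 0 1) :=
    (continuous_const.mul (continuous_pow k)).integrableOn_Icc.mono_set Ioo_subset_Icc_self
  rw [← ofReal_integral_eq_lintegral_ofReal hint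
    ((ae_restrict_iff' measurableSet_Ioo).2 (ae_of_all _ fun x hx => by
      have := hx.1.le; positivity)),
    integral_const_mul, ← integral_Ioc_eq_integral_Ioo,
    ← intervalIntegral.integral_of_le zero_le_one, integral_pow]
  simp [div_eq_mul_inv]

lemma lintegral_pow_mul_exp_neg_mul_div_factorial (p : ℕ) {b : ℝ} (hb : 0 < b) :
    ∫⁻ t in Ioi (0 : ℝ), ENNReal.ofReal (t ^ p * exp (-(b * t)) / p !) =
      ENNReal.ofReal (1 / b ^ (p + 1)) := by
  have hGamma := integral_rpow_mul_exp_neg_mul_Ioi (a := p + 1) (by positivity) hb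
  simp only [add_sub_cancel_right, rpow_natCast, Gamma_nat_eq_factorial] at hGamma
  have hint : IntegrableOn (fun t : ℝ => t ^ p * exp (-(b * t))) (Ioi 0) :=
    .of_integral_ne_zero (by rw [hGamma]; positivity)
  rw [← ofReal_integral_eq_lintegral_ofReal (hint.div_const _)
    ((ae_restrict_iff' measurableSet_Ioi).2 (ae_of_all _ fun t ht => by
      have := (mem_Ioi.1 ht).le; positivity)),
    integral_div, hGamma]
  congr 1
  rw [← rpow_natCast, Nat.cast_add_one, one_div, inv_rpow hb.le]
  field_simp

lemma image_one_sub_exp_neg_Ioi : (fun t : ℝ => 1 - exp (-t)) '' Ioi 0 = Ioo 0 1 := by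
  ext x
  constructor
  · rintro ⟨t, ht, rfl⟩
    have : exp (-t) < 1 := exp_lt_one_iff.2 (neg_lt_zero.2 ht)
    exact ⟨by linarith, by linarith [exp_pos (-t)]⟩
  · rintro ⟨hx0, hx1⟩
    refine ⟨-log (1 - x), ?_, ?_⟩
    · simpa using log_neg (by linarith) (by linarith)
    · simp [exp_log (by linarith : 0 < 1 - x)]

lemma lintegral_neg_log_one_sub_pow_div (p : ℕ) :
    ∫⁻ x in Ioo (0 : ℝ) 1, ENNReal.ofReal ((-log (1 - x)) ^ p / p ! / x) =
      ∑' j : ℕ, ENNReal.ofReal (1 / ((j : ℝ) + 1) ^ (p + 1)) := by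
  have hderiv : ∀ t ∈ Ioi (0 : ℝ),
      HasDerivWithinAt (fun t => 1 - exp (-t)) (exp (-t)) (Ioi 0) t := fun t _ => by
    simpa using ((hasDerivAt_neg t).exp.const_sub 1).hasDerivWithinAt
  have hinj : InjOn (fun t : ℝ => 1 - exp (-t)) (Ioi 0) := fun a _ b _ h => by simpa using h
  have hgeom : ∀ t ∈ Ioi (0 : ℝ),
      ENNReal.ofReal |exp (-t)| *
          ENNReal.ofReal ((-log (1 - (1 - exp (-t)))) ^ p / p ! / (1 - exp (-t))) =
        ∑' j : ℕ, ENNReal.ofReal (t ^ p * exp (-((j + 1) * t)) / p !) := by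
    intro t ht
    have hq0 := exp_pos (-t)
    have hq1 : exp (-t) < 1 := exp_lt_one_iff.2 (neg_lt_zero.2 ht)
    have hsum : HasSum (fun j : ℕ => t ^ p * exp (-((j + 1) * t)) / p !)
        (exp (-t) * (t ^ p / p ! / (1 - exp (-t)))) := by
      have hexp (j : ℕ) : exp (-((j + 1) * t)) = exp (-t) * exp (-t) ^ j := by
        rw [← exp_nat_mul, ← exp_add]
        ring_nf
      have h := (hasSum_geometric_of_lt_one hq0.le hq1).mul_left (t ^ p / p ! * exp (-t))
      rw [show t ^ p / p ! * exp (-t) * (1 - exp (-t))⁻¹ =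
          exp (-t) * (t ^ p / p ! / (1 - exp (-t))) by ring] at h
      exact h.congr_fun fun j => by rw [hexp]; ring
    rw [abs_of_pos hq0, ← ENNReal.ofReal_mul hq0.le, sub_sub_cancel, log_exp, neg_neg,
      ← hsum.tsum_eq, ENNReal.ofReal_tsum_of_nonneg
        (fun j => by have := (mem_Ioi.1 ht).le; positivity) hsum.summable]
  rw [← image_one_sub_exp_neg_Ioi,
    lintegral_image_eq_lintegral_abs_deriv_mul measurableSet_Ioi hderiv hinj,
    setLIntegral_congr_fun measurableSet_Ioi hgeom, lintegral_tsum fun j => by fun_prop]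
  exact tsum_congr fun j => lintegral_pow_mul_exp_neg_mul_div_factorial p (by positivity)

lemma tsum_eq_tsum_of_tsum_ofReal_eq {α : Type*} {f g : α → ℝ} (hf : ∀ a, 0 ≤ f a)
    (hg : ∀ a, 0 ≤ g a) (h : ∑' a, ENNReal.ofReal (f a) = ∑' a, ENNReal.ofReal (g a)) :
    ∑' a, f a = ∑' a, g a := by
  simpa [ENNReal.tsum_toReal_eq, ENNReal.toReal_ofReal, hf, hg] using congrArg ENNReal.toReal h

noncomputable def esymmRecip (m n : ℕ) : ℝ := mh (List.replicate m 1) n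

lemma esymmRecip_zero (n : ℕ) : esymmRecip 0 n = 1 := rfl

lemma esymmRecip_succ (m n : ℕ) :
    esymmRecip (m + 1) n = ∑ k ∈ Finset.range n, esymmRecip m k / (k + 1) := by
  rw [esymmRecip, List.replicate_succ, mh, ← Finset.Ico_add_one_right_eq_Icc,
    Finset.sum_Ico_eq_sum_range, Nat.add_sub_cancel]
  refine Finset.sum_congr rfl fun k _ => ?_
  simp [esymmRecip, add_comm, div_eq_inv_mul]

lemma esymmRecip_nonneg (m n : ℕ) : 0 ≤ esymmRecip m n := by
  induction m generalizing n with
  | zero => simp [esymmRecip_zero]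
  | succ m ih =>
    rw [esymmRecip_succ]
    exact Finset.sum_nonneg fun k _ => div_nonneg (ih k) (by positivity)

lemma esymmRecip_le_pow (m n : ℕ) : esymmRecip m n ≤ ((n : ℝ) + 1) ^ m := by
  induction m generalizing n with
  | zero => simp [esymmRecip_zero]
  | succ m ih =>
    rw [esymmRecip_succ]
    calc ∑ k ∈ Finset.range n, esymmRecip m k / (k + 1)
        ≤ ∑ k ∈ Finset.range n, ((n : ℝ) + 1) ^ m := by
          gcongr with k hk
          calc esymmRecip m k / (k + 1) ≤ esymmRecip m k :=
                div_le_self (esymmRecip_nonneg m k) (by linarith [k.cast_nonneg (α := ℝ)])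
            _ ≤ ((k : ℝ) + 1) ^ m := ih k
            _ ≤ ((n : ℝ) + 1) ^ m := by gcongr; exact_mod_cast (Finset.mem_range.1 hk).le
      _ = n * ((n : ℝ) + 1) ^ m := by simp
      _ ≤ ((n : ℝ) + 1) ^ (m + 1) := by rw [pow_succ']; gcongr; linarith

lemma summable_norm_esymmRecip_mul_pow (m : ℕ) {x : ℝ} (hx : |x| < 1) :
    Summable fun n : ℕ => ‖esymmRecip m n * x ^ n‖ := by
  refine (summable_add_one_pow_mul_geometric m (abs_nonneg x) hx).of_nonneg_of_le
    (fun n => norm_nonneg _) fun n => ?_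
  rw [norm_mul, norm_pow, norm_of_nonneg (esymmRecip_nonneg m n), Real.norm_eq_abs]
  gcongr
  exact esymmRecip_le_pow m n

lemma summable_norm_esymmRecip_div_mul_pow (m : ℕ) {x : ℝ} (hx : |x| < 1) :
    Summable fun k : ℕ => ‖esymmRecip m k / (k + 1) * x ^ k‖ := by
  refine (summable_norm_esymmRecip_mul_pow m hx).of_nonneg_of_le (fun _ => norm_nonneg _)
    fun k => ?_
  rw [norm_mul, norm_mul, norm_div]
  gcongr
  exact div_le_self (norm_nonneg _) (by simp [abs_of_pos (by positivity : (0 : ℝ) < k + 1)])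

noncomputable def esymmGF (m : ℕ) (x : ℝ) : ℝ :=
  ∑' n : ℕ, esymmRecip m n / (n + 1) * x ^ (n + 1)

lemma hasDerivAt_esymmGF (m : ℕ) {x : ℝ} (hx : |x| < 1) :
    HasDerivAt (esymmGF m) (∑' n : ℕ, esymmRecip m n * x ^ n) x := by
  obtain ⟨r, hxr, hr₁⟩ := exists_between hx
  have hr₀ : 0 ≤ r := (abs_nonneg x).trans hxr.le
  have mem_ball {y : ℝ} : y ∈ Metric.ball (0 : ℝ) r ↔ |y| < r := by
    rw [mem_ball_zero_iff, Real.norm_eq_abs]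
  refine hasDerivAt_tsum_of_isPreconnected
    (g := fun n z => esymmRecip m n / (n + 1) * z ^ (n + 1))
    (g' := fun n z => esymmRecip m n * z ^ n) (summable_add_one_pow_mul_geometric m hr₀ hr₁)
    Metric.isOpen_ball (convex_ball (0 : ℝ) r).isPreconnected (fun n y _ => ?_)
    (fun n y hy => ?_)
    (Metric.mem_ball_self (hxr.trans_le' (abs_nonneg x))) ?_ (mem_ball.2 hxr)
  · have hn : (n : ℝ) + 1 ≠ 0 := by positivity
    refine ((hasDerivAt_pow (n + 1) y).const_mul (esymmRecip m n / (n + 1))).congr_deriv ?_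
    push_cast [Nat.add_sub_cancel]
    field_simp
  · rw [norm_mul, norm_pow, norm_of_nonneg (esymmRecip_nonneg m n), Real.norm_eq_abs]
    gcongr
    · exact esymmRecip_le_pow m n
    · exact (mem_ball.1 hy).le
  · simp

lemma tsum_esymmRecip_succ_mul_pow (m : ℕ) {x : ℝ} (hx : |x| < 1) :
    ∑' n : ℕ, esymmRecip (m + 1) n * x ^ n = esymmGF m x / (1 - x) := by
  have hGF : Summable fun k : ℕ => ‖esymmRecip m k / (k + 1) * x ^ (k + 1)‖ := by
    simpa only [pow_succ, ← mul_assoc, norm_mul _ x] using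
      (summable_norm_esymmRecip_div_mul_pow m hx).mul_right ‖x‖
  have hgeom : Summable fun j : ℕ => ‖x ^ j‖ := by
    simpa [norm_pow] using summable_geometric_of_lt_one (abs_nonneg x) hx
  have hcauchy (n : ℕ) : ∑ k ∈ Finset.range (n + 1),
      esymmRecip m k / (k + 1) * x ^ (k + 1) * x ^ (n - k) =
        esymmRecip (m + 1) (n + 1) * x ^ (n + 1) := by
    rw [esymmRecip_succ, Finset.sum_mul]
    refine Finset.sum_congr rfl fun k hk => ?_
    have hkn := Finset.mem_range.1 hk
    rw [mul_assoc, ← pow_add, show k + 1 + (n - k) = n + 1 by omega]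
  rw [div_eq_mul_inv, ← tsum_geometric_of_abs_lt_one hx, esymmGF,
    tsum_mul_tsum_eq_tsum_sum_range_of_summable_norm hGF hgeom, tsum_congr hcauchy,
    (summable_norm_esymmRecip_mul_pow (m + 1) hx).of_norm.tsum_eq_zero_add]
  simp [esymmRecip_succ]

lemma esymmGF_eq (m : ℕ) {x : ℝ} (hx : |x| < 1) :
    esymmGF m x = (-log (1 - x)) ^ (m + 1) / (m + 1)! := by
  induction m generalizing x with
  | zero =>
    simpa [esymmGF, esymmRecip_zero, div_eq_inv_mul]
      using (Real.hasSum_pow_div_log_of_abs_lt_one hx).tsum_eq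
  | succ m ih =>
    have mem_ball {y : ℝ} : y ∈ Metric.ball (0 : ℝ) 1 ↔ |y| < 1 := by
      rw [mem_ball_zero_iff, Real.norm_eq_abs]
    have hGF : ∀ y ∈ Metric.ball (0 : ℝ) 1,
        HasDerivAt (esymmGF (m + 1)) ((-log (1 - y)) ^ (m + 1) / (m + 1)! / (1 - y)) y := by
      intro y hy
      rw [← ih (mem_ball.1 hy), ← tsum_esymmRecip_succ_mul_pow m (mem_ball.1 hy)]
      exact hasDerivAt_esymmGF _ (mem_ball.1 hy)
    have hlog : ∀ y ∈ Metric.ball (0 : ℝ) 1, HasDerivAt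
        (fun y => (-log (1 - y)) ^ (m + 1 + 1) / (m + 1 + 1)!)
        ((-log (1 - y)) ^ (m + 1) / (m + 1)! / (1 - y)) y := fun y hy =>
      hasDerivAt_neg_log_one_sub_pow_div_factorial (m + 1) (abs_lt.1 (mem_ball.1 hy)).2
    refine Metric.isOpen_ball.eqOn_of_deriv_eq (convex_ball (0 : ℝ) 1).isPreconnected
      (fun y hy => (hGF y hy).differentiableAt.differentiableWithinAt)
      (fun y hy => (hlog y hy).differentiableAt.differentiableWithinAt)
      (fun y hy => by rw [(hGF y hy).deriv, (hlog y hy).deriv])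
      (Metric.mem_ball_self one_pos) ?_ (mem_ball.2 hx)
    simp [esymmGF]

lemma tsum_ofReal_esymmRecip_div_sq (m : ℕ) :
    ∑' k : ℕ, ENNReal.ofReal (esymmRecip m k / ((k : ℝ) + 1) ^ 2) =
      ∑' j : ℕ, ENNReal.ofReal (1 / ((j : ℝ) + 1) ^ (m + 2)) := by
  have hterm (k : ℕ) : ENNReal.ofReal (esymmRecip m k / ((k : ℝ) + 1) ^ 2) =
      ∫⁻ x in Ioo (0 : ℝ) 1, ENNReal.ofReal (esymmRecip m k / (k + 1) * x ^ k) := by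
    rw [lintegral_Ioo_const_mul_pow (div_nonneg (esymmRecip_nonneg m k) (by positivity)),
      div_div, sq]
  have hGF : ∀ x ∈ Ioo (0 : ℝ) 1,
      ∑' k : ℕ, ENNReal.ofReal (esymmRecip m k / (k + 1) * x ^ k) =
        ENNReal.ofReal ((-log (1 - x)) ^ (m + 1) / (m + 1)! / x) := by
    rintro x ⟨hx0, hx1⟩
    have hx : |x| < 1 := abs_lt.2 ⟨by linarith, hx1⟩
    have hGF_eq : esymmGF m x = (∑' k : ℕ, esymmRecip m k / (k + 1) * x ^ k) * x := by
      rw [esymmGF, ← tsum_mul_right]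
      simp only [pow_succ, mul_assoc]
    rw [← ENNReal.ofReal_tsum_of_nonneg
        (fun k => mul_nonneg (div_nonneg (esymmRecip_nonneg m k) (by positivity)) (by positivity))
        (summable_norm_esymmRecip_div_mul_pow m hx).of_norm,
      ← esymmGF_eq m hx, hGF_eq, mul_div_cancel_right₀ _ hx0.ne']
  rw [tsum_congr hterm, ← lintegral_tsum fun k => by fun_prop,
    setLIntegral_congr_fun measurableSet_Ioo hGF, lintegral_neg_log_one_sub_pow_div]

end ZetaTwoOnes

open ZetaTwoOnes

theorem stmt_12 (m : ℕ) :
    mzv (2 :: List.replicate m 1) = rz ((m : ℝ) + 2) := by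
  have hmzv : mzv (2 :: List.replicate m 1) = ∑' k : ℕ, esymmRecip m k / ((k : ℝ) + 1) ^ 2 := by
    simp only [mzv, Real.rpow_two, one_div_mul_eq_div]
    rfl
  have hrz : rz ((m : ℝ) + 2) = ∑' k : ℕ, 1 / ((k : ℝ) + 1) ^ (m + 2) := by
    simp only [rz]
    norm_cast
  rw [hmzv, hrz]
  exact tsum_eq_tsum_of_tsum_ofReal_eq
    (fun k => div_nonneg (esymmRecip_nonneg m k) (by positivity)) (fun k => by positivity)
    (tsum_ofReal_esymmRecip_div_sq m)
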